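/- arXiv:1410.3645 — 6 statements merged into one kernel-verified Lean document; each statement's English description precedes it below -/
import Mathlib

section
/- Over a field of characteristic 2, the 3-dimensional Lie algebra S with basis e, h, f and brackets [e,h] = e, [f,h] = f, [e,f] = h is simple: every nonzero ideal of S equals S. -/
def Sbr (K : Type*) [Field K] (x y : Fin 3 → K) : Fin 3 → K :=
  ![x 0 * y 1 + x 1 * y 0, x 0 * y 2 + x 2 * y 0, x 2 * y 1 + x 1 * y 2]

/-- Over a field of characteristic 2, the 3-dimensional Lie algebra `S` with
basis `e, h, f` and brackets `[e,h] = e`, `[f,h] = f`, `[e,f] = h` is simple: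
every nonzero ideal of `S` equals `S`. -/
theorem stmt1 (K : Type*) [Field K] [CharP K 2]
    (I : Submodule K (Fin 3 → K))
    (hI : ∀ x y : Fin 3 → K, y ∈ I → Sbr K x y ∈ I)
    (hne : I ≠ ⊥) : I = ⊤ := by
  obtain ⟨v, hv, hv0⟩ := Submodule.exists_mem_ne_zero_of_ne_bot hne
  set e : Fin 3 → K := ![1, 0, 0] with he
  set h : Fin 3 → K := ![0, 1, 0] with hh
  set f : Fin 3 → K := ![0, 0, 1] with hf
  -- it suffices that h ∈ I
  have key : h ∈ I → I = ⊤ := by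
    intro hhI
    have heI : e ∈ I := by
      have := hI e h hhI
      have heq : Sbr K e h = e := by
        funext i; fin_cases i <;> simp [Sbr, he, hh]
      rwa [heq] at this
    have hfI : f ∈ I := by
      have := hI f h hhI
      have heq : Sbr K f h = f := by
        funext i; fin_cases i <;> simp [Sbr, hf, hh]
      rwa [heq] at this
    rw [eq_top_iff]
    intro x _
    have hx : x = x 0 • e + x 1 • h + x 2 • f := by
      funext i; fin_cases i <;> simp [he, hh, hf]
    rw [hx]
    exact add_mem (add_mem (I.smul_mem _ heI) (I.smul_mem _ hhI)) (I.smul_mem _ hfI)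
  -- from e ∈ I get h ∈ I
  have e_to_h : e ∈ I → h ∈ I := by
    intro heI
    have := hI f e heI
    have heq : Sbr K f e = h := by
      funext i; fin_cases i <;> simp [Sbr, he, hh, hf]
    rwa [heq] at this
  have f_to_h : f ∈ I → h ∈ I := by
    intro hfI
    have := hI e f hfI
    have heq : Sbr K e f = h := by
      funext i; fin_cases i <;> simp [Sbr, he, hh, hf]
    rwa [heq] at this
  by_cases hc : v 2 ≠ 0
  · -- Sbr e (Sbr e v) = (v 2, 0, 0)
    have h1 := hI e (Sbr K e v) (hI e v hv)
    have heq : Sbr K e (Sbr K e v) = (v 2) • e := by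
      funext i; fin_cases i <;> simp [Sbr, he] <;> ring
    rw [heq] at h1
    have h2 : e ∈ I := by
      have := I.smul_mem (v 2)⁻¹ h1
      rwa [smul_smul, inv_mul_cancel₀ hc, one_smul] at this
    exact key (e_to_h h2)
  · push_neg at hc
    by_cases ha : v 0 ≠ 0
    · have h1 := hI f (Sbr K f v) (hI f v hv)
      have heq : Sbr K f (Sbr K f v) = (v 0) • f := by
        funext i; fin_cases i <;> simp [Sbr, hf] <;> ring
      rw [heq] at h1
      have h2 : f ∈ I := by
        have := I.smul_mem (v 0)⁻¹ h1
        rwa [smul_smul, inv_mul_cancel₀ ha, one_smul] at this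
      exact key (f_to_h h2)
    · push_neg at ha
      have hb : v 1 ≠ 0 := by
        intro hb
        apply hv0
        funext i; fin_cases i <;> simp [ha, hb, hc]
      have h2 : h ∈ I := by
        have := I.smul_mem (v 1)⁻¹ hv
        have heq : (v 1)⁻¹ • v = h := by
          funext i; fin_cases i <;>
            simp [ha, hc, hh, inv_mul_cancel₀ hb]
        rwa [heq] at this
      exact key h2
end

section
/- Over a field of characteristic 2, for the 3-dimensional simple Lie algebra S with brackets [e,h]=e, [f,h]=f, [e,f]=h, the derivation (ad f)^2 is not inner, i.e. it is not equal to ad x for any x in S. -/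
def Sf (K : Type*) [Field K] : Fin 3 → K := ![0, 0, 1]

/-- Over a field of characteristic 2, for the 3-dimensional simple Lie
algebra `S`, the derivation `(ad f)²` is not inner: it is not equal to
`ad x` for any `x` in `S`. -/
theorem stmt5 (K : Type*) [Field K] [CharP K 2] :
    ¬ ∃ x : Fin 3 → K, ∀ y : Fin 3 → K,
      Sbr K (Sf K) (Sbr K (Sf K) y) = Sbr K x y := by
  rintro ⟨x, hx⟩
  have h := congrFun (hx ![1, 0, 0]) 2
  simp [Sbr, Sf] at h
end

section
/- Over a field of characteristic 2, the bilinear map φ on the 3-dimensional simple Lie algebra S defined on the basis by φ(e,h) = f, φ(h,e) = f, and φ = 0 on all other pairs of basis elements, is a 2-cocycle of S with coefficients in the adjoint module: φ([x,y],z) + φ([z,x],y) + φ([y,z],x) + [x,φ(y,z)] + [z,φ(x,y)] + [y,φ(z,x)] = 0 for all x,y,z in S. -/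
/-- The bilinear map `φ` on `S` with `φ(e,h) = φ(h,e) = f` and zero on all
other pairs of basis elements, in coordinates. -/
def Sphi (K : Type*) [Field K] (x y : Fin 3 → K) : Fin 3 → K :=
  ![0, 0, x 0 * y 1 + x 1 * y 0]

/-- Over a field of characteristic 2, the bilinear map `φ` on `S` given by
`φ(e,h) = φ(h,e) = f` (and zero on other basis pairs) is a 2-cocycle of `S`
with coefficients in the adjoint module. -/
theorem stmt6 (K : Type*) [Field K] [CharP K 2] :
    ∀ x y z : Fin 3 → K,
      Sphi K (Sbr K x y) z + Sphi K (Sbr K z x) y + Sphi K (Sbr K y z) x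
        + Sbr K x (Sphi K y z) + Sbr K z (Sphi K x y) + Sbr K y (Sphi K z x)
        = 0 := by
  intro x y z
  funext i
  have h2 : (2 : K) = 0 := by exact_mod_cast CharP.cast_eq_zero K 2
  fin_cases i <;> simp [Sbr, Sphi]
  · linear_combination (x 0 * y 0 * z 1 - x 0 * z 1 * y 1 + x 0 * y 1 * z 0 - y 0 * z 1 * x 1 + y 0 * z 0 * x 1 - y 1 * z 0 * x 1 + x 0 * z 1 * y 1 + y 0 * z 1 * x 1 + y 1 * z 0 * x 1) * h2
  · linear_combination (x 0 * y 1 * z 1 + x 0 * y 0 * z 2 + x 0 * y 2 * z 0 + y 1 * z 0 * x 1 + z 1 * y 0 * x 1 + y 0 * z 0 * x 2 + x 0 * y 1 * z 1 + y 1 * x 1 * z 0 + x 1 * y 0 * z 1) * h2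
end

section
/- Over a field of characteristic 2, the 2-cocycle φ on the 3-dimensional simple Lie algebra S given by φ(e,h) = φ(h,e) = f and zero on other basis pairs is not a coboundary: there is no linear map Ω: S → S with φ(x,y) = Ω([x,y]) + [x,Ω(y)] + [y,Ω(x)] for all x,y in S. -/
/-- Over a field of characteristic 2, the 2-cocycle `φ` on `S` given by
`φ(e,h) = φ(h,e) = f` and zero on other basis pairs is not a coboundary:
there is no linear map `Ω : S → S` with
`φ(x,y) = Ω([x,y]) + [x,Ω(y)] + [y,Ω(x)]` for all `x, y`. -/
theorem stmt7 (K : Type*) [Field K] [CharP K 2] :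
    ¬ ∃ Ω : (Fin 3 → K) →ₗ[K] (Fin 3 → K), ∀ x y : Fin 3 → K,
      Sphi K x y = Ω (Sbr K x y) + Sbr K x (Ω y) + Sbr K y (Ω x) := by
  rintro ⟨Ω, hΩ⟩
  have h := congrFun (hΩ ![1,0,0] ![0,1,0]) 2
  have hbr : Sbr K ![1,0,0] ![0,1,0] = ![1,0,0] := by
    simp [Sbr]
  rw [hbr] at h
  simp [Sphi, Sbr, Pi.add_apply] at h
  have he : Matrix.vecHead (Matrix.vecTail (Matrix.vecTail (Ω ![1,0,0]))) = Ω ![1,0,0] 2 := rfl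
  rw [he, ← two_mul] at h
  have h2 : (2 : K) = 0 := CharP.cast_eq_zero K 2
  rw [h2, zero_mul] at h
  exact one_ne_zero h
end

section
/- Let A be a commutative associative unital algebra over a field K of characteristic 2, with D a derivation of A. The bracket [a,b] := D(ab) defines a Lie algebra structure on A, i.e. it is alternating and satisfies the Jacobi identity. -/
/-- Let `A` be a commutative associative unital algebra over a field `K` of
characteristic 2 and `D` a derivation of `A`. The bracket `[a,b] := D(ab)`
makes `A` a Lie algebra: it is (bilinear by construction,) alternating and
satisfies the Jacobi identity. -/
theorem stmt10 (K : Type*) [Field K] [CharP K 2]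
    (A : Type*) [CommRing A] [Algebra K A]
    (D : A →ₗ[K] A)
    (hD : ∀ a b : A, D (a * b) = D a * b + a * D b) :
    (∀ a : A, D (a * a) = 0) ∧
    (∀ a b c : A,
      D (D (a * b) * c) + D (D (c * a) * b) + D (D (b * c) * a) = 0) := by
  have h2A : (2 : A) = 0 := by
    have h := CharP.cast_eq_zero K 2
    rw [show (2:A) = algebraMap K A 2 from by rw [map_ofNat], show (2:K) = 0 from by exact_mod_cast h, map_zero]
  have hx : ∀ x : A, x + x = 0 := fun x => by
    have : x + x = 2 * x := by ring
    rw [this, h2A, zero_mul]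
  constructor
  · intro a
    rw [hD]
    have : D a * a + a * D a = a * D a + a * D a := by ring
    rw [this, hx]
  · intro a b c
    simp only [hD, map_add]
    have key : (D (D a) * b + D a * D b + (D a * D b + a * D (D b))) * c + (D a * b + a * D b) * D c +
        ((D (D c) * a + D c * D a + (D c * D a + c * D (D a))) * b + (D c * a + c * D a) * D b) +
      ((D (D b) * c + D b * D c + (D b * D c + b * D (D c))) * a + (D b * c + b * D c) * D a) =
      2 * (D (D a) * b * c + a * D (D b) * c + D (D c) * a * b +
        2 * (D a * D b * c) + 2 * (a * D b * D c) + 2 * (D a * b * D c)) := by ring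
    rw [key, h2A, zero_mul]
end

section
/- Over a field K of characteristic 2, the 4-dimensional algebra W with basis e₋₁, e₀, e₁, e₂ and brackets [e₋₁,e₀]=e₋₁, [e₁,e₀]=e₁, [e₋₁,e₁]=e₀, [e₋₁,e₂]=e₁, [e₀,e₂]=0, [e₁,e₂]=0 (all other products of distinct basis vectors determined by symmetry, [x,x]=0) is a Lie algebra, and its derived subalgebra [W,W] is the 3-dimensional span of e₋₁, e₀, e₁. -/
/-- The bracket of `W₁(2)` in coordinates with respect to the basis
`e₋₁, e₀, e₁, e₂`: determined by `[e₋₁,e₀]=e₋₁`, `[e₁,e₀]=e₁`,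
`[e₋₁,e₁]=e₀`, `[e₋₁,e₂]=e₁`, `[e₀,e₂]=0`, `[e₁,e₂]=0`, symmetry
(characteristic 2) and `[x,x]=0`. -/
def Wbr (K : Type*) [Field K] (x y : Fin 4 → K) : Fin 4 → K :=
  ![x 0 * y 1 + x 1 * y 0,
    x 0 * y 2 + x 2 * y 0,
    x 2 * y 1 + x 1 * y 2 + x 0 * y 3 + x 3 * y 0,
    0]

def Wem1 (K : Type*) [Field K] : Fin 4 → K := ![1, 0, 0, 0]
def We0 (K : Type*) [Field K] : Fin 4 → K := ![0, 1, 0, 0]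
def We1 (K : Type*) [Field K] : Fin 4 → K := ![0, 0, 1, 0]

/-- Over a field of characteristic 2, the 4-dimensional algebra `W = W₁(2)`
with basis `e₋₁, e₀, e₁, e₂` and the indicated brackets is a Lie algebra,
and its derived subalgebra `[W,W]` is the 3-dimensional span of
`e₋₁, e₀, e₁`. -/
theorem stmt11 (K : Type*) [Field K] [CharP K 2] :
    (∀ x : Fin 4 → K, Wbr K x x = 0) ∧
    (∀ x y : Fin 4 → K, Wbr K y x = Wbr K x y) ∧
    (∀ x y z : Fin 4 → K,
      Wbr K (Wbr K x y) z + Wbr K (Wbr K z x) y + Wbr K (Wbr K y z) x = 0) ∧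
    Submodule.span K {w : Fin 4 → K | ∃ x y : Fin 4 → K, w = Wbr K x y}
      = Submodule.span K ({Wem1 K, We0 K, We1 K} : Set (Fin 4 → K)) := by
  have h2 : (2 : K) = 0 := by exact_mod_cast CharP.cast_eq_zero K 2
  refine ⟨?_, ?_, ?_, ?_⟩
  · intro x
    funext i
    fin_cases i <;> simp [Wbr] <;> ring_nf <;> simp [h2]
  · intro x y
    funext i
    fin_cases i <;> simp [Wbr] <;> ring
  · intro x y z
    funext i
    fin_cases i <;> simp [Wbr] <;> ring_nf <;> simp [h2]
  · apply le_antisymm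
    · rw [Submodule.span_le]
      rintro w ⟨x, y, rfl⟩
      have : Wbr K x y = (x 0 * y 1 + x 1 * y 0) • Wem1 K + (x 0 * y 2 + x 2 * y 0) • We0 K +
          (x 2 * y 1 + x 1 * y 2 + x 0 * y 3 + x 3 * y 0) • We1 K := by
        funext i
        fin_cases i <;> simp [Wbr, Wem1, We0, We1]
      rw [this]
      refine Submodule.add_mem _ (Submodule.add_mem _ ?_ ?_) ?_ <;>
        exact Submodule.smul_mem _ _ (Submodule.subset_span (by simp))
    · rw [Submodule.span_le]
      rintro w hw
      apply Submodule.subset_span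
      rcases hw with h | h | h
      · exact ⟨Wem1 K, We0 K, by subst h; funext i; fin_cases i <;> simp [Wbr, Wem1, We0]⟩
      · exact ⟨Wem1 K, We1 K, by subst h; funext i; fin_cases i <;> simp [Wbr, Wem1, We0, We1]⟩
      · exact ⟨Wem1 K, ![0,0,0,1], by subst h; funext i; fin_cases i <;> simp [Wbr, Wem1, We1]⟩
end
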